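/- arXiv:1908.00325 — 4 statements merged into one kernel-verified Lean document; each statement's English description precedes it below -/
import Mathlib

section
/- Let n, K, n_K be positive integers with n = K·n_K and K ≥ 2. Let (Ω, 𝒫) be a probability space and e_1, …, e_n square-integrable real random variables on Ω. Let 𝒦 denote the fold map assigning observation i to fold 𝒦(i) = k whenever n_K(k−1) < i ≤ n_K·k. Assume there exist real numbers σ², ω, γ such that Var(e_i) = σ² for every i; Cov(e_i, e_j) = ω for every i ≠ j with 𝒦(i) = 𝒦(j); and Cov(e_i, e_j) = γ for every i, j with 𝒦(i) ≠ 𝒦(j). Then the variance of the K-fold cross-validation error estimator Err = (1/n)·Σ_{i=1}^n e_i satisfies Var(Err) = σ²/n + ((n_K−1)/n)·ω + ((n−n_K)/n)·γ. -/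
/-!
The variance of a sum is the sum of all pairwise covariances. For a fixed observation `i`,
the row `j ↦ Cov(e i, e j)` consists of one variance `σ²`, `n_K - 1` within-fold covariances
`ω` and `n - n_K` cross-fold covariances `γ`, because every fold has exactly `n_K` members.
Summing the `n` equal rows and scaling by `(1/n)²` gives the formula.
-/

open MeasureTheory ProbabilityTheory Finset

theorem Fin.card_filter_div_eq_div {n m : ℕ} (hm : m ∣ n) (i : Fin n) :
    #{j : Fin n | j.val / m = i.val / m} = m := by
  have hm0 : 0 < m := Nat.pos_of_dvd_of_pos hm i.pos
  have hq : i.val / m * m + m ≤ n := calc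
    _ = (i.val / m + 1) * m := by ring
    _ ≤ n / m * m := Nat.mul_le_mul_right m (Nat.div_lt_div_of_lt_of_dvd hm i.isLt)
    _ = n := Nat.div_mul_cancel hm
  rw [← card_map Fin.valEmbedding]
  convert Nat.card_Ico (i.val / m * m) (i.val / m * m + m) using 2
  · ext j
    simp only [mem_map, mem_filter, mem_univ, true_and, Fin.valEmbedding_apply,
      Nat.div_eq_iff hm0, mem_Ico]
    constructor
    · rintro ⟨j, hj, rfl⟩
      omega
    · intro hj
      exact ⟨⟨j, by omega⟩, by simp only; omega, rfl⟩
  · omega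

theorem Finset.sum_univ_eq_of_const_on_block {ι R : Type*} [Fintype ι] [DecidableEq ι]
    [CommRing R]
    (S : Finset ι) {i : ι} (hi : i ∈ S) (c : ι → R) {a b d : R} (hii : c i = a)
    (hS : ∀ j ∈ S, j ≠ i → c j = b) (hSc : ∀ j ∉ S, c j = d) :
    ∑ j, c j = a + (#S - 1) * b + (Fintype.card ι - #S) * d := by
  rw [← sum_add_sum_compl S, ← add_sum_erase S c hi, hii,
    sum_congr rfl fun j hj => hS j (mem_of_mem_erase hj) (ne_of_mem_erase hj),
    sum_congr rfl fun j hj => hSc j (mem_compl.mp hj), sum_const, sum_const,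
    nsmul_eq_mul, nsmul_eq_mul, cast_card_erase_of_mem hi, card_compl,
    Nat.cast_sub (card_le_univ S)]

/-- Observations are 0-indexed (`Fin n`), so the fold of `i` is `i.val / nK`. -/
theorem cvk_variance_general
    {Ω : Type*} [MeasurableSpace Ω] (P : Measure Ω) [IsProbabilityMeasure P]
    (n K nK : ℕ) (hn : n = K * nK)
    (e : Fin n → Ω → ℝ) (he : ∀ i, MemLp (e i) 2 P)
    (σ2 ω γ : ℝ)
    (hvar : ∀ i, variance (e i) P = σ2)
    (hcov_same : ∀ i j : Fin n, i ≠ j → i.val / nK = j.val / nK →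
      ∫ x, (e i x - ∫ y, e i y ∂P) * (e j x - ∫ y, e j y ∂P) ∂P = ω)
    (hcov_diff : ∀ i j : Fin n, i.val / nK ≠ j.val / nK →
      ∫ x, (e i x - ∫ y, e i y ∂P) * (e j x - ∫ y, e j y ∂P) ∂P = γ) :
    variance (fun x => (1 / (n : ℝ)) * ∑ i, e i x) P =
      σ2 / (n : ℝ) + (((nK : ℝ) - 1) / (n : ℝ)) * ω
        + (((n : ℝ) - (nK : ℝ)) / (n : ℝ)) * γ := by
  have hrow (i : Fin n) :
      ∑ j, cov[e i, e j; P] = σ2 + ((nK : ℝ) - 1) * ω + ((n : ℝ) - nK) * γ := by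
    have h := Finset.sum_univ_eq_of_const_on_block {j | j.val / nK = i.val / nK} (by simp)
      (fun j => cov[e i, e j; P]) ((covariance_self (he i).aemeasurable).trans (hvar i))
      (fun j hj hji => hcov_same i j hji.symm (mem_filter.1 hj).2.symm)
      (fun j hj => hcov_diff i j fun h => hj (by simp [h]))
    rwa [Fin.card_filter_div_eq_div (Dvd.intro_left K hn.symm) i, Fintype.card_fin] at h
  rw [variance_const_mul, variance_fun_sum he, sum_congr rfl fun i _ => hrow i, sum_const,
    card_univ, Fintype.card_fin, nsmul_eq_mul]
  -- `n / (n * n) = n⁻¹` holds also for `n = 0`, so no case split is needed.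
  linear_combination
    (σ2 + ((nK : ℝ) - 1) * ω + ((n : ℝ) - nK) * γ) * div_self_mul_self' (n : ℝ)

/-- The variance of the K-fold cross-validation error estimator
`Err = (1/n) ∑ i, e i` in terms of the covariance structure of the
per-observation errors `e i`.  The fold map assigns observation `i`
(0-indexed, as `Fin n`) to fold `i.val / nK`, which is the 0-indexed
version of `𝒦(i) = k ↔ n_K (k-1) < i ≤ n_K k`. -/
theorem cvk_variance
    {Ω : Type*} [MeasurableSpace Ω] (P : Measure Ω) [IsProbabilityMeasure P]
    (n K nK : ℕ) (hK : 2 ≤ K) (hnK : 0 < nK) (hn : n = K * nK)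
    (e : Fin n → Ω → ℝ) (he : ∀ i, MemLp (e i) 2 P)
    (σ2 ω γ : ℝ)
    (hvar : ∀ i, variance (e i) P = σ2)
    (hcov_same : ∀ i j : Fin n, i ≠ j → i.val / nK = j.val / nK →
      ∫ x, (e i x - ∫ y, e i y ∂P) * (e j x - ∫ y, e j y ∂P) ∂P = ω)
    (hcov_diff : ∀ i j : Fin n, i.val / nK ≠ j.val / nK →
      ∫ x, (e i x - ∫ y, e i y ∂P) * (e j x - ∫ y, e j y ∂P) ∂P = γ) :
    variance (fun x => (1 / (n : ℝ)) * ∑ i, e i x) P =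
      σ2 / (n : ℝ) + (((nK : ℝ) - 1) / (n : ℝ)) * ω
        + (((n : ℝ) - (nK : ℝ)) / (n : ℝ)) * γ :=
  cvk_variance_general P n K nK hn e he σ2 ω γ hvar hcov_same hcov_diff
end

section
/- Let n, K, n_K be positive integers with n = K·n_K and K ≥ 2. Let (Ω, 𝒫) be a probability space and e_1, …, e_n square-integrable real random variables on Ω with the fold map 𝒦(i) = k whenever n_K(k−1) < i ≤ n_K·k. Assume there exist real numbers μ, σ², ω, γ such that E[e_i] = μ and Var(e_i) = σ² for every i; Cov(e_i, e_j) = ω for every i ≠ j with 𝒦(i) = 𝒦(j); and Cov(e_i, e_j) = γ whenever 𝒦(i) ≠ 𝒦(j). Let err_k = (1/n_K)·Σ_{i : 𝒦(i)=k} e_i and let V̂ = (1/K)·(1/(K−1))·Σ_{k=1}^K (err_k − (1/K)·Σ_{k'=1}^K err_{k'})² be the naive (sample-variance based) estimator of the variance of the cross-validation estimator. Then E[V̂] = σ²/n + ((n_K−1)/n)·ω − γ/K. -/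
/-!
The fold means `err k` are exchangeable: they share the mean `μ`, the variance
`(σ² + (n_K - 1) ω) / n_K` and the pairwise covariance `γ`. For exchangeable `X₁, …, X_K`
with variance `a` and covariance `b`, the expansion
`∑ₖ (Xₖ - X̄)² = ∑ₖ (Xₖ - μ)² - (∑ₖ Xₖ - Kμ)² / K` gives
`E ∑ₖ (Xₖ - X̄)² = K a - (K a + K (K - 1) b) / K = (K - 1)(a - b)`,
and dividing by `K (K - 1)` yields the claim.
-/

open MeasureTheory ProbabilityTheory Finset

lemma Finset.sum_sum_ite_eq_card_mul {ι R : Type*} [DecidableEq ι] [CommRing R]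
    (s : Finset ι) (a b : R) :
    ∑ i ∈ s, ∑ j ∈ s, (if i = j then a else b) = #s * (a + (#s - 1) * b) := by
  have hrow : ∀ i ∈ s, ∑ j ∈ s, (if i = j then a else b) = a + (#s - 1) * b := by
    intro i hi
    rw [sum_ite, filter_eq s i, if_pos hi, filter_ne s i]
    simp [card_erase_of_mem hi, Nat.cast_sub (card_pos.2 ⟨i, hi⟩)]
  rw [sum_congr rfl hrow, sum_const, nsmul_eq_mul]

lemma Finset.sum_sq_sub_mean_eq {ι : Type*} (s : Finset ι) (x : ι → ℝ) (m : ℝ) :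
    ∑ k ∈ s, (x k - (1 / #s) * ∑ l ∈ s, x l) ^ 2
      = ∑ k ∈ s, (x k - m) ^ 2 - (∑ k ∈ s, x k - #s * m) ^ 2 / #s := by
  rcases s.eq_empty_or_nonempty with rfl | hs
  · simp
  have hN : (#s : ℝ) ≠ 0 := by positivity
  simp only [sub_sq, sum_add_distrib, sum_sub_distrib, sum_const, ← sum_mul, ← mul_sum,
    nsmul_eq_mul]
  field_simp
  ring

lemma Fin.card_filter_val_div_eq {K m k : ℕ} (hm : 0 < m) (hk : k < K) :
    #{i : Fin (K * m) | i.val / m = k} = m := by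
  have hfold : ({i : Fin (K * m) | i.val / m = k} : Finset _).map Fin.valEmbedding
      = Ico (k * m) (k * m + m) := by
    have hKm : (k + 1) * m ≤ K * m := Nat.mul_le_mul_right m hk
    ext j
    simp only [mem_map, mem_filter, mem_univ, true_and, Fin.valEmbedding_apply, mem_Ico]
    constructor
    · rintro ⟨i, hi, rfl⟩
      rw [Nat.div_eq_iff hm] at hi
      omega
    · intro hj
      refine ⟨⟨j, by rw [add_one_mul] at hKm; omega⟩,
        show j / m = k from (Nat.div_eq_iff hm).2 (by omega), rfl⟩
  rw [← card_map, hfold, Nat.card_Ico, Nat.add_sub_cancel_left]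

section SampleVariance

variable {Ω ι : Type*} [MeasurableSpace Ω] {P : Measure Ω} [IsProbabilityMeasure P]
  {X : ι → Ω → ℝ} {s : Finset ι}

lemma integral_sum_sq_sub_mean {m : ℝ} (hX : ∀ k ∈ s, MemLp (X k) 2 P)
    (hm : ∀ k ∈ s, P[X k] = m) :
    ∫ ω, ∑ k ∈ s, (X k ω - (1 / #s) * ∑ l ∈ s, X l ω) ^ 2 ∂P
      = ∑ k ∈ s, Var[X k; P] - Var[fun ω ↦ ∑ k ∈ s, X k ω; P] / #s := by
  have hsum : MemLp (fun ω ↦ ∑ k ∈ s, X k ω) 2 P := memLp_finsetSum s hX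
  have hsum_mean : P[fun ω ↦ ∑ k ∈ s, X k ω] = #s * m := by
    rw [integral_finsetSum s fun k hk ↦ (hX k hk).integrable one_le_two, sum_congr rfl hm,
      sum_const, nsmul_eq_mul]
  simp_rw [sum_sq_sub_mean_eq s _ m]
  rw [integral_sub, integral_finsetSum, integral_div, variance_eq_integral hsum.aemeasurable,
    hsum_mean]
  · congr 1
    refine sum_congr rfl fun k hk ↦ ?_
    rw [variance_eq_integral (hX k hk).aemeasurable, hm k hk]
  · exact fun k hk ↦ ((hX k hk).sub (memLp_const m)).integrable_sq
  · exact integrable_finsetSum s fun k hk ↦ ((hX k hk).sub (memLp_const m)).integrable_sq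
  · exact (hsum.sub (memLp_const _)).integrable_sq.div_const _

lemma integral_sum_sq_sub_mean_of_covariance_eq [DecidableEq ι] {m a b : ℝ}
    (hs : s.Nonempty) (hX : ∀ k ∈ s, MemLp (X k) 2 P) (hm : ∀ k ∈ s, P[X k] = m)
    (hcov : ∀ k ∈ s, ∀ l ∈ s, cov[X k, X l; P] = if k = l then a else b) :
    ∫ ω, ∑ k ∈ s, (X k ω - (1 / #s) * ∑ l ∈ s, X l ω) ^ 2 ∂P
      = (#s - 1) * (a - b) := by
  have hvar : ∀ k ∈ s, Var[X k; P] = a := fun k hk ↦ by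
    rw [← covariance_self (hX k hk).aemeasurable, hcov k hk k hk, if_pos rfl]
  rw [integral_sum_sq_sub_mean hX hm, sum_congr rfl hvar, variance_fun_sum' hX,
    sum_congr rfl fun k hk ↦ sum_congr rfl fun l hl ↦ hcov k hk l hl, sum_sum_ite_eq_card_mul,
    sum_const, nsmul_eq_mul]
  have hN : (#s : ℝ) ≠ 0 := by positivity
  field_simp
  ring

end SampleVariance

section BlockCovariance

variable {Ω ι κ : Type*} [MeasurableSpace Ω] {P : Measure Ω} [IsFiniteMeasure P]
  [DecidableEq κ] {X : ι → Ω → ℝ} {f : ι → κ} {σ2 ω γ : ℝ}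

lemma covariance_sum_fiber_self [DecidableEq ι] (hX : ∀ i, MemLp (X i) 2 P)
    (hcov : ∀ i j, f i = f j → cov[X i, X j; P] = if i = j then σ2 else ω)
    (s : Finset ι) (k : κ) :
    cov[fun x ↦ ∑ i ∈ s with f i = k, X i x, fun x ↦ ∑ j ∈ s with f j = k, X j x; P]
      = #{i ∈ s | f i = k} * (σ2 + (#{i ∈ s | f i = k} - 1) * ω) := by
  rw [covariance_fun_sum_fun_sum' (fun i _ ↦ hX i) (fun j _ ↦ hX j),
    ← sum_sum_ite_eq_card_mul]
  refine sum_congr rfl fun i hi ↦ sum_congr rfl fun j hj ↦ hcov i j ?_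
  rw [(mem_filter.1 hi).2, (mem_filter.1 hj).2]

lemma covariance_sum_fiber_of_ne (hX : ∀ i, MemLp (X i) 2 P)
    (hcov : ∀ i j, f i ≠ f j → cov[X i, X j; P] = γ)
    (s : Finset ι) {k l : κ} (hkl : k ≠ l) :
    cov[fun x ↦ ∑ i ∈ s with f i = k, X i x, fun x ↦ ∑ j ∈ s with f j = l, X j x; P]
      = #{i ∈ s | f i = k} * #{j ∈ s | f j = l} * γ := by
  rw [covariance_fun_sum_fun_sum' (fun i _ ↦ hX i) (fun j _ ↦ hX j)]
  have hγ : ∀ i ∈ s.filter (f · = k), ∀ j ∈ s.filter (f · = l), cov[X i, X j; P] = γ :=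
    fun i hi j hj ↦ hcov i j <| by rw [(mem_filter.1 hi).2, (mem_filter.1 hj).2]; exact hkl
  rw [sum_congr rfl fun i hi ↦ sum_congr rfl (hγ i hi)]
  simp only [sum_const, nsmul_eq_mul, mul_assoc]

end BlockCovariance

/-- Observation `i : Fin n` lies in the 0-indexed fold `i.val / m`, so `foldMean m e k` is the
paper's `err_{k+1}`. -/
noncomputable def foldMean {Ω : Type*} {n : ℕ} (m : ℕ) (e : Fin n → Ω → ℝ) (k : ℕ) : Ω → ℝ :=
  fun x ↦ (1 / (m : ℝ)) * ∑ i with i.val / m = k, e i x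

lemma memLp_foldMean {Ω : Type*} [MeasurableSpace Ω] {P : Measure Ω} {n m : ℕ}
    {e : Fin n → Ω → ℝ} (he : ∀ i, MemLp (e i) 2 P) (k : ℕ) :
    MemLp (foldMean m e k) 2 P :=
  (memLp_finsetSum _ fun i _ ↦ he i).const_mul _

section FoldMean

variable {Ω : Type*} [MeasurableSpace Ω] {P : Measure Ω} {K m : ℕ} {e : Fin (K * m) → Ω → ℝ}

lemma integral_foldMean {μ : ℝ} (hm : 0 < m) (he : ∀ i, Integrable (e i) P)
    (hmean : ∀ i, P[e i] = μ) {k : ℕ} (hk : k < K) :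
    P[foldMean m e k] = μ := by
  unfold foldMean
  rw [integral_const_mul, integral_finsetSum _ fun i _ ↦ he i]
  simp only [hmean, sum_const, Fin.card_filter_val_div_eq hm hk, nsmul_eq_mul]
  field_simp

variable [IsFiniteMeasure P]

lemma covariance_foldMean_self {σ2 ω : ℝ} (hm : 0 < m) (he : ∀ i, MemLp (e i) 2 P)
    (hcov : ∀ i j, i.val / m = j.val / m → cov[e i, e j; P] = if i = j then σ2 else ω)
    {k : ℕ} (hk : k < K) :
    cov[foldMean m e k, foldMean m e k; P] = (σ2 + (m - 1) * ω) / m := by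
  unfold foldMean
  rw [covariance_const_mul_left, covariance_const_mul_right,
    covariance_sum_fiber_self he hcov, Fin.card_filter_val_div_eq hm hk]
  field_simp

lemma covariance_foldMean_of_ne {γ : ℝ} (hm : 0 < m) (he : ∀ i, MemLp (e i) 2 P)
    (hcov : ∀ i j, i.val / m ≠ j.val / m → cov[e i, e j; P] = γ)
    {k l : ℕ} (hk : k < K) (hl : l < K) (hkl : k ≠ l) :
    cov[foldMean m e k, foldMean m e l; P] = γ := by
  unfold foldMean
  rw [covariance_const_mul_left, covariance_const_mul_right,
    covariance_sum_fiber_of_ne he hcov _ hkl, Fin.card_filter_val_div_eq hm hk,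
    Fin.card_filter_val_div_eq hm hl]
  field_simp

end FoldMean

/-- The expectation of the naive (sample-variance based) estimator
`V̂ = (1/K)·(1/(K-1))·∑ₖ (errₖ - mean)²` of the variance of the K-fold
cross-validation error estimator, where `err k = (1/n_K) ∑_{i : 𝒦(i)=k} e i`.
The fold map assigns observation `i : Fin n` (0-indexed) to fold
`i.val / nK`, the 0-indexed version of `𝒦(i) = k ↔ n_K (k-1) < i ≤ n_K k`. -/
theorem cvk_naive_variance_estimator_expectation
    {Ω : Type*} [MeasurableSpace Ω] (P : Measure Ω) [IsProbabilityMeasure P]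
    (n K nK : ℕ) (hK : 2 ≤ K) (hnK : 0 < nK) (hn : n = K * nK)
    (e : Fin n → Ω → ℝ) (he : ∀ i, MemLp (e i) 2 P)
    (μ σ2 ω γ : ℝ)
    (hmean : ∀ i, ∫ x, e i x ∂P = μ)
    (hvar : ∀ i, variance (e i) P = σ2)
    (hcov_same : ∀ i j : Fin n, i ≠ j → i.val / nK = j.val / nK →
      ∫ x, (e i x - ∫ y, e i y ∂P) * (e j x - ∫ y, e j y ∂P) ∂P = ω)
    (hcov_diff : ∀ i j : Fin n, i.val / nK ≠ j.val / nK →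
      ∫ x, (e i x - ∫ y, e i y ∂P) * (e j x - ∫ y, e j y ∂P) ∂P = γ)
    (err : ℕ → Ω → ℝ)
    (herr : ∀ k x, err k x =
      (1 / (nK : ℝ)) * ∑ i ∈ Finset.univ.filter (fun i : Fin n => i.val / nK = k), e i x) :
    (∫ x, (1 / (K : ℝ)) * (1 / ((K : ℝ) - 1)) *
        ∑ k ∈ Finset.range K,
          (err k x - (1 / (K : ℝ)) * ∑ k' ∈ Finset.range K, err k' x) ^ 2 ∂P) =
      σ2 / (n : ℝ) + (((nK : ℝ) - 1) / (n : ℝ)) * ω - γ / (K : ℝ) := by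
  subst hn
  obtain rfl : err = foldMean nK e := funext₂ herr
  have hcov_within : ∀ i j : Fin (K * nK), i.val / nK = j.val / nK →
      cov[e i, e j; P] = if i = j then σ2 else ω := by
    intro i j hij
    split_ifs with h
    · rw [h, covariance_self (he j).aemeasurable, hvar]
    · exact hcov_same i j h hij
  have hcov_fold : ∀ k ∈ range K, ∀ l ∈ range K, cov[foldMean nK e k, foldMean nK e l; P]
      = if k = l then (σ2 + (nK - 1) * ω) / nK else γ := by
    intro k hk l hl
    split_ifs with hkl
    · rw [← hkl]
      exact covariance_foldMean_self hnK he hcov_within (mem_range.1 hk)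
    · exact covariance_foldMean_of_ne hnK he hcov_diff (mem_range.1 hk) (mem_range.1 hl) hkl
  have hsample := integral_sum_sq_sub_mean_of_covariance_eq (nonempty_range_iff.2 (by omega))
    (fun k _ ↦ memLp_foldMean he k)
    (fun k hk ↦ integral_foldMean hnK (fun i ↦ (he i).integrable one_le_two) hmean
      (mem_range.1 hk)) hcov_fold
  rw [card_range] at hsample
  have hK1 : (K : ℝ) - 1 ≠ 0 := by
    have : (2 : ℝ) ≤ K := by exact_mod_cast hK
    linarith
  rw [integral_const_mul, hsample]
  push_cast
  field_simp
end

section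
/- Let n₁ and n₁K be positive integers with n₁K < n₁. Define g : ℝ → ℝ by g(ε) = (1/((n₁−n₁K)·C(n₁, n₁−n₁K)))·Σ_{r=1}^{n₁−n₁K} (1−ε)^{r−1}·(ε·n₁ − r·ε + 1), where C(a,b) denotes the binomial coefficient. Then g(0) = 1/C(n₁, n₁K), and the derivative of g at ε = 0 equals g'(0) = n₁K / C(n₁, n₁K); consequently g'(0)/g(0) = n₁K. (This is the probability, under perturbation of the probability mass of observation i by ε, of a cross-validation training set of size n₁ − n₁K that contains observation i.) -/
/-! With `m = n₁ - n₁K`, every summand equals `1` at `ε = 0`, so the sum is `m`, and the `r`-th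
summand has derivative `n₁ + 1 - 2r` there; these add up to `m (n₁ - m) = m n₁K`. The prefactor
`1 / (m C(n₁, n₁K))` then gives `g 0 = 1 / C(n₁, n₁K)` and `g' 0 = n₁K / C(n₁, n₁K)`. -/

open Finset

noncomputable def trainingSetSum (m : ℕ) (n ε : ℝ) : ℝ :=
  ∑ r ∈ Icc 1 m, (1 - ε) ^ (r - 1) * (ε * n - r * ε + 1)

lemma sum_Icc_add_one_sub_two_mul (a : ℝ) (m : ℕ) :
    ∑ r ∈ Icc 1 m, (a + 1 - 2 * (r : ℝ)) = m * (a - m) := by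
  induction m with
  | zero => simp
  | succ m ih =>
    rw [sum_Icc_succ_top (by omega), ih]
    push_cast
    ring

lemma trainingSetSum_zero (m : ℕ) (n : ℝ) : trainingSetSum m n 0 = m := by
  simp [trainingSetSum]

lemma hasDerivAt_trainingSetSum_term (n : ℝ) {r : ℕ} (hr : 1 ≤ r) :
    HasDerivAt (fun ε : ℝ => (1 - ε) ^ (r - 1) * (ε * n - r * ε + 1)) (n + 1 - 2 * r) 0 := by
  have hbase : HasDerivAt (fun ε : ℝ => 1 - ε) (-1) 0 := by
    simpa using (hasDerivAt_id (0 : ℝ)).const_sub 1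
  have hlin : HasDerivAt (fun ε : ℝ => ε * n - r * ε + 1) (n - r) 0 := by
    simpa using (((hasDerivAt_id (0 : ℝ)).mul_const n).sub
      ((hasDerivAt_id (0 : ℝ)).const_mul (r : ℝ))).add_const 1
  refine ((hbase.pow (r - 1)).mul hlin).congr_deriv ?_
  simp [Nat.cast_sub hr]
  ring

lemma hasDerivAt_trainingSetSum (m : ℕ) (n : ℝ) :
    HasDerivAt (trainingSetSum m n) (m * (n - m)) 0 := by
  rw [← sum_Icc_add_one_sub_two_mul]
  unfold trainingSetSum
  exact HasDerivAt.fun_sum fun r hr => hasDerivAt_trainingSetSum_term n (mem_Icc.mp hr).1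

theorem cv_perturbed_prob_included_general
    (n1 n1K : ℕ) (h : n1K < n1)
    (g : ℝ → ℝ)
    (hg : ∀ ε : ℝ, g ε =
      (1 / (((n1 : ℝ) - (n1K : ℝ)) * (n1.choose (n1 - n1K) : ℝ))) *
        ∑ r ∈ Finset.Icc 1 (n1 - n1K),
          (1 - ε) ^ (r - 1) * (ε * (n1 : ℝ) - (r : ℝ) * ε + 1)) :
    g 0 = 1 / (n1.choose n1K : ℝ) ∧
      deriv g 0 = (n1K : ℝ) / (n1.choose n1K : ℝ) ∧
      deriv g 0 / g 0 = (n1K : ℝ) := by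
  have hm : ((n1 - n1K : ℕ) : ℝ) = n1 - n1K := Nat.cast_sub h.le
  have hm_pos : (0 : ℝ) < n1 - n1K := by rw [← hm]; exact_mod_cast Nat.sub_pos_of_lt h
  have hC_pos : (0 : ℝ) < n1.choose n1K := by exact_mod_cast Nat.choose_pos h.le
  have hg_eq : g = fun ε => 1 / ((n1 - n1K) * n1.choose n1K) * trainingSetSum (n1 - n1K) n1 ε := by
    funext ε
    rw [hg, Nat.choose_symm h.le, trainingSetSum]
  have hg0 : g 0 = 1 / (n1.choose n1K : ℝ) := by
    rw [hg_eq]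
    beta_reduce
    rw [trainingSetSum_zero, hm]
    field_simp
  have hdg : deriv g 0 = (n1K : ℝ) / (n1.choose n1K : ℝ) := by
    rw [hg_eq, ((hasDerivAt_trainingSetSum _ _).const_mul _).deriv, hm]
    field_simp
    ring
  refine ⟨hg0, hdg, ?_⟩
  rw [hg0, hdg]
  field_simp

/-- The perturbed probability of a cross-validation training set of size
`n₁ - n₁K` that contains the perturbed observation `i`:
`g ε = (1/((n₁-n₁K)·C(n₁, n₁-n₁K))) ∑_{r=1}^{n₁-n₁K} (1-ε)^(r-1)(εn₁ - rε + 1)`.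
Its value at `0` is `1/C(n₁, n₁K)`, its derivative at `0` is
`n₁K / C(n₁, n₁K)`, and hence `g'(0)/g(0) = n₁K`. -/
theorem cv_perturbed_prob_included
    (n1 n1K : ℕ) (h0 : 0 < n1K) (h : n1K < n1)
    (g : ℝ → ℝ)
    (hg : ∀ ε : ℝ, g ε =
      (1 / (((n1 : ℝ) - (n1K : ℝ)) * (n1.choose (n1 - n1K) : ℝ))) *
        ∑ r ∈ Finset.Icc 1 (n1 - n1K),
          (1 - ε) ^ (r - 1) * (ε * (n1 : ℝ) - (r : ℝ) * ε + 1)) :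
    g 0 = 1 / (n1.choose n1K : ℝ) ∧
      deriv g 0 = (n1K : ℝ) / (n1.choose n1K : ℝ) ∧
      deriv g 0 / g 0 = (n1K : ℝ) :=
  cv_perturbed_prob_included_general n1 n1K h g hg
end

section
/- Let n₁, n₂, M be positive integers, fix i ∈ {1,…,n₁}, and let ψ : {1,…,M} × {1,…,n₁} × {1,…,n₂} → ℝ, I¹ : {1,…,M} × {1,…,n₁} → {0,1}, I² : {1,…,M} × {1,…,n₂} → {0,1} with Σ_m I²(m,j₂)·I¹(m,j₁) > 0 for all (j₁,j₂). Let g₀ > 0, and for each (j₁,j₂,m) let g_{j₁,j₂,m} : ℝ → ℝ be differentiable at 0 with g_{j₁,j₂,m}(0) = g₀; write y(j₁,j₂,m) = g'_{j₁,j₂,m}(0)/g₀. Define F(ε) = Σ_{j₂=1}^{n₂} Σ_{j₁=1}^{n₁} ((1−ε)/n₁ + ε·δ_{i j₁})·(1/n₂)·[ Σ_m I²(m,j₂)I¹(m,j₁)ψ(m,j₁,j₂)g_{j₁,j₂,m}(ε) / Σ_m I²(m,j₂)I¹(m,j₁)g_{j₁,j₂,m}(ε) ]. Then F is differentiable at 0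 and F'(0) = [AUC_{1i} − AUC^{CVKM}] + (1/(n₁n₂))·Σ_{j₂}Σ_{j₁} [ Σ_m I²I¹ψ·y(j₁,j₂,m) / Σ_m I²I¹ ] − (1/(n₁n₂))·Σ_{j₂}Σ_{j₁} [ (Σ_m I²I¹ψ)·(Σ_m I²I¹·y(j₁,j₂,m)) / (Σ_m I²I¹)² ], where AUC_{1i} = (1/n₂)·Σ_{j₂} [Σ_m I²(m,j₂)I¹(m,i)ψ(m,i,j₂)/Σ_m I²(m,j₂)I¹(m,i)] and AUC^{CVKM} = (1/(n₁n₂))·Σ_{j₂}Σ_{j₁} [Σ_m I²I¹ψ/Σ_m I²I¹]. -/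
/-!
Each summand of `F` is a contamination weight `(1 - ε)/n₁ + ε δ_{i j₁}` times a ratio of
`g`-weighted sums. At `ε = 0` all `g` equal `g₀`, which cancels from the ratio, so the weight's
derivative `δ_{i j₁} - 1/n₁` produces `AUC_{1i} - AUC^{CVKM}`, and the quotient rule applied to the
ratio, with `g' = g₀ y`, produces the other two terms.
-/

open Finset

theorem Finset.sum_mul_eq_of_forall_eq {ι R : Type*} [NonUnitalNonAssocSemiring R] {s : Finset ι}
    {v g : ι → R} {c : R} (hg : ∀ m ∈ s, g m = c) :
    ∑ m ∈ s, v m * g m = (∑ m ∈ s, v m) * c := by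
  rw [sum_mul]; exact sum_congr rfl fun m hm => by rw [hg m hm]

theorem HasDerivAt.weighted_ratio {ι 𝕜 : Type*} [NontriviallyNormedField 𝕜] {s : Finset ι}
    {w a y : ι → 𝕜} {g : ι → 𝕜 → 𝕜} {c x : 𝕜} (hc : c ≠ 0) (hS : ∑ m ∈ s, w m ≠ 0)
    (hg : ∀ m ∈ s, HasDerivAt (g m) (c * y m) x) (hgx : ∀ m ∈ s, g m x = c) :
    HasDerivAt (fun ε => (∑ m ∈ s, w m * a m * g m ε) / ∑ m ∈ s, w m * g m ε)
      ((∑ m ∈ s, w m * a m * y m) / ∑ m ∈ s, w m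
        - (∑ m ∈ s, w m * a m) * (∑ m ∈ s, w m * y m) / (∑ m ∈ s, w m) ^ 2) x := by
  have hN := HasDerivAt.fun_sum fun m hm => (hg m hm).const_mul (w m * a m)
  have hD := HasDerivAt.fun_sum fun m hm => (hg m hm).const_mul (w m)
  have sum_deriv (v : ι → 𝕜) : ∑ m ∈ s, v m * (c * y m) = c * ∑ m ∈ s, v m * y m := by
    rw [mul_sum]; exact sum_congr rfl fun m _ => by ring
  have hDx : ∑ m ∈ s, w m * g m x ≠ 0 := by
    rw [sum_mul_eq_of_forall_eq hgx]; exact mul_ne_zero hS hc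
  refine (hN.fun_div hD hDx).congr_deriv ?_
  rw [sum_mul_eq_of_forall_eq hgx, sum_mul_eq_of_forall_eq hgx, sum_deriv, sum_deriv]
  field_simp

theorem HasDerivAt.contamination_weight_mul {𝕜 : Type*} [NontriviallyNormedField 𝕜]
    {R : 𝕜 → 𝕜} {R' : 𝕜} (u d c : 𝕜) (hR : HasDerivAt R R' 0) :
    HasDerivAt (fun ε => ((1 - ε) / u + ε * d) * c * R ε)
      ((d - 1 / u) * c * R 0 + 1 / u * c * R') 0 := by
  have hp : HasDerivAt (fun ε : 𝕜 => (1 - ε) / u + ε * d) (d - 1 / u) 0 :=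
    ((((hasDerivAt_id 0).const_sub 1).div_const u).add ((hasDerivAt_id 0).mul_const d)).congr_deriv
      (by ring)
  exact ((hp.mul_const c).mul hR).congr_deriv (by simp only [sub_zero, zero_mul, add_zero])

theorem cvkm_influence_function_derivative_general
    (n1 n2 M : ℕ)
    (i : Fin n1)
    (ψ : Fin M → Fin n1 → Fin n2 → ℝ)
    (I1 : Fin M → Fin n1 → ℝ) (I2 : Fin M → Fin n2 → ℝ)
    (hpos : ∀ (j1 : Fin n1) (j2 : Fin n2), 0 < ∑ m, I2 m j2 * I1 m j1)
    (g0 : ℝ) (hg0 : 0 < g0)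
    (g : Fin n1 → Fin n2 → Fin M → ℝ → ℝ)
    (hgdiff : ∀ j1 j2 m, DifferentiableAt ℝ (g j1 j2 m) 0)
    (hgval : ∀ j1 j2 m, g j1 j2 m 0 = g0)
    (y : Fin n1 → Fin n2 → Fin M → ℝ)
    (hy : ∀ j1 j2 m, y j1 j2 m = deriv (g j1 j2 m) 0 / g0)
    (AUC1i AUCCVKM : ℝ)
    (hAUC1i : AUC1i = (1 / (n2 : ℝ)) * ∑ j2,
      (∑ m, I2 m j2 * I1 m i * ψ m i j2) / (∑ m, I2 m j2 * I1 m i))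
    (hAUCCVKM : AUCCVKM = (1 / ((n1 : ℝ) * (n2 : ℝ))) * ∑ j2, ∑ j1,
      (∑ m, I2 m j2 * I1 m j1 * ψ m j1 j2) / (∑ m, I2 m j2 * I1 m j1))
    (F : ℝ → ℝ)
    (hF : ∀ ε : ℝ, F ε = ∑ j2, ∑ j1,
      ((1 - ε) / (n1 : ℝ) + ε * (if j1 = i then 1 else 0)) * (1 / (n2 : ℝ)) *
        ((∑ m, I2 m j2 * I1 m j1 * ψ m j1 j2 * g j1 j2 m ε) /
          (∑ m, I2 m j2 * I1 m j1 * g j1 j2 m ε))) :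
    DifferentiableAt ℝ F 0 ∧
      deriv F 0 =
        (AUC1i - AUCCVKM)
        + (1 / ((n1 : ℝ) * (n2 : ℝ))) * ∑ j2, ∑ j1,
            (∑ m, I2 m j2 * I1 m j1 * ψ m j1 j2 * y j1 j2 m) /
              (∑ m, I2 m j2 * I1 m j1)
        - (1 / ((n1 : ℝ) * (n2 : ℝ))) * ∑ j2, ∑ j1,
            ((∑ m, I2 m j2 * I1 m j1 * ψ m j1 j2) *
                (∑ m, I2 m j2 * I1 m j1 * y j1 j2 m)) /
              (∑ m, I2 m j2 * I1 m j1) ^ 2 := by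
  have hg_deriv : ∀ j1 j2 m, HasDerivAt (g j1 j2 m) (g0 * y j1 j2 m) 0 := fun j1 j2 m => by
    rw [hy, mul_div_cancel₀ _ hg0.ne']; exact (hgdiff j1 j2 m).hasDerivAt
  have hasDerivAt_F := HasDerivAt.fun_sum (u := univ) fun j2 _ => HasDerivAt.fun_sum (u := univ)
    fun j1 _ => HasDerivAt.contamination_weight_mul (n1 : ℝ) (if j1 = i then 1 else 0) (1 / (n2 : ℝ))
      (HasDerivAt.weighted_ratio (a := fun m => ψ m j1 j2) hg0.ne' (hpos j1 j2).ne'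
        (fun m _ => hg_deriv j1 j2 m) (fun m _ => hgval j1 j2 m))
  obtain rfl : F = _ := funext hF
  refine ⟨hasDerivAt_F.differentiableAt, ?_⟩
  rw [hasDerivAt_F.deriv, hAUC1i, hAUCCVKM]
  simp only [sum_mul_eq_of_forall_eq (fun m _ => hgval _ _ m), mul_div_mul_right _ _ hg0.ne']
  simp only [sub_mul, mul_sub, sum_add_distrib, sum_sub_distrib, ite_mul, one_mul, zero_mul,
    sum_ite_eq', mem_univ, if_true, ← mul_sum]
  ring

/-- The influence-function component `Û_{1i}` for the CVKM estimator: the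
perturbed estimator `F ε` (probability mass of class-1 observation `i`
perturbed by `ε`, each training-set probability `g j₁ j₂ m ε` equal to the
unperturbed value `g₀` at `ε = 0`) is differentiable at `0` and its
derivative decomposes into the three terms `I + II - III`. -/
theorem cvkm_influence_function_derivative
    (n1 n2 M : ℕ) (h1 : 0 < n1) (h2 : 0 < n2) (hM : 0 < M)
    (i : Fin n1)
    (ψ : Fin M → Fin n1 → Fin n2 → ℝ)
    (I1 : Fin M → Fin n1 → ℝ) (I2 : Fin M → Fin n2 → ℝ)
    (hI1 : ∀ m j1, I1 m j1 = 0 ∨ I1 m j1 = 1)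
    (hI2 : ∀ m j2, I2 m j2 = 0 ∨ I2 m j2 = 1)
    (hpos : ∀ (j1 : Fin n1) (j2 : Fin n2), 0 < ∑ m, I2 m j2 * I1 m j1)
    (g0 : ℝ) (hg0 : 0 < g0)
    (g : Fin n1 → Fin n2 → Fin M → ℝ → ℝ)
    (hgdiff : ∀ j1 j2 m, DifferentiableAt ℝ (g j1 j2 m) 0)
    (hgval : ∀ j1 j2 m, g j1 j2 m 0 = g0)
    (y : Fin n1 → Fin n2 → Fin M → ℝ)
    (hy : ∀ j1 j2 m, y j1 j2 m = deriv (g j1 j2 m) 0 / g0)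
    (AUC1i AUCCVKM : ℝ)
    (hAUC1i : AUC1i = (1 / (n2 : ℝ)) * ∑ j2,
      (∑ m, I2 m j2 * I1 m i * ψ m i j2) / (∑ m, I2 m j2 * I1 m i))
    (hAUCCVKM : AUCCVKM = (1 / ((n1 : ℝ) * (n2 : ℝ))) * ∑ j2, ∑ j1,
      (∑ m, I2 m j2 * I1 m j1 * ψ m j1 j2) / (∑ m, I2 m j2 * I1 m j1))
    (F : ℝ → ℝ)
    (hF : ∀ ε : ℝ, F ε = ∑ j2, ∑ j1,
      ((1 - ε) / (n1 : ℝ) + ε * (if j1 = i then 1 else 0)) * (1 / (n2 : ℝ)) *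
        ((∑ m, I2 m j2 * I1 m j1 * ψ m j1 j2 * g j1 j2 m ε) /
          (∑ m, I2 m j2 * I1 m j1 * g j1 j2 m ε))) :
    DifferentiableAt ℝ F 0 ∧
      deriv F 0 =
        (AUC1i - AUCCVKM)
        + (1 / ((n1 : ℝ) * (n2 : ℝ))) * ∑ j2, ∑ j1,
            (∑ m, I2 m j2 * I1 m j1 * ψ m j1 j2 * y j1 j2 m) /
              (∑ m, I2 m j2 * I1 m j1)
        - (1 / ((n1 : ℝ) * (n2 : ℝ))) * ∑ j2, ∑ j1,
            ((∑ m, I2 m j2 * I1 m j1 * ψ m j1 j2) *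
                (∑ m, I2 m j2 * I1 m j1 * y j1 j2 m)) /
              (∑ m, I2 m j2 * I1 m j1) ^ 2 :=
  cvkm_influence_function_derivative_general n1 n2 M i ψ I1 I2 hpos g0 hg0 g hgdiff hgval y hy AUC1i
    AUCCVKM hAUC1i hAUCCVKM F hF
end
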